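/- In 𝔱_{1,n}, for any three pairwise distinct indices i, j, k in {1,…,n} and any integer α ≥ 0, one has [y_k, (ad x_i)^α(t_{ij})] = −Σ_{γ,δ≥0, γ+δ=α−1} C(α,δ)·[(ad x_i)^γ(t_{ik}), (ad x_i)^δ(t_{ij})], where C(α,δ) is the binomial coefficient and the sum is empty when α = 0. -/

import Mathlib

/-! The elliptic braid Lie algebra `𝔱_{1,n}` presented by generators and relations. -/

noncomputable section

/-- Generators of `𝔱_{1,n}`: `x i`, `y i` for `i ∈ [n]` and `t i j` for `i ≠ j`. -/
inductive TGen (n : ℕ) : Type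
  | x : Fin n → TGen n
  | y : Fin n → TGen n
  | t : (i j : Fin n) → i ≠ j → TGen n

variable (k : Type) [Field k] [CharZero k] (n : ℕ)

/-- The free Lie algebra on the generators of `𝔱_{1,n}`. -/
abbrev FT : Type := FreeLieAlgebra k (TGen n)

/-- The generator `x i` in the free Lie algebra. -/
def fx (i : Fin n) : FT k n := FreeLieAlgebra.of k (TGen.x i)

/-- The generator `y i` in the free Lie algebra. -/
def fy (i : Fin n) : FT k n := FreeLieAlgebra.of k (TGen.y i)

/-- The generator `t i j` (for `i ≠ j`) in the free Lie algebra. -/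
def ft (i j : Fin n) (h : i ≠ j) : FT k n := FreeLieAlgebra.of k (TGen.t i j h)

/-- The defining relations of `𝔱_{1,n}`. -/
inductive TRel : FT k n → Prop
  | xx (i j : Fin n) : TRel ⁅fx k n i, fx k n j⁆
  | yy (i j : Fin n) : TRel ⁅fy k n i, fy k n j⁆
  | xy (i j : Fin n) (h : i ≠ j) : TRel (⁅fx k n i, fy k n j⁆ - ft k n i j h)
  | xyDiag (i : Fin n) :
      TRel (⁅fx k n i, fy k n i⁆ + ∑ j : Fin n, if h : i ≠ j then ft k n i j h else 0)
  | xt (i j l : Fin n) (h : i ≠ j) (h1 : l ≠ i) (h2 : l ≠ j) :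
      TRel ⁅fx k n l, ft k n i j h⁆
  | yt (i j l : Fin n) (h : i ≠ j) (h1 : l ≠ i) (h2 : l ≠ j) :
      TRel ⁅fy k n l, ft k n i j h⁆
  | xxt (i j : Fin n) (h : i ≠ j) : TRel ⁅fx k n i + fx k n j, ft k n i j h⁆
  | yyt (i j : Fin n) (h : i ≠ j) : TRel ⁅fy k n i + fy k n j, ft k n i j h⁆
  | tsymm (i j : Fin n) (h : i ≠ j) : TRel (ft k n i j h - ft k n j i h.symm)

/-- The Lie ideal of relations of `𝔱_{1,n}`. -/
abbrev tIdeal : LieIdeal k (FT k n) :=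
  LieSubmodule.lieSpan k (FT k n) {a | TRel k n a}

/-- The Lie algebra `𝔱_{1,n}`. -/
abbrev T1 : Type := FT k n ⧸ tIdeal k n

/-- The generator `x i` of `𝔱_{1,n}`. -/
def tx (i : Fin n) : T1 k n := LieSubmodule.Quotient.mk (N := tIdeal k n) (fx k n i)

/-- The generator `y i` of `𝔱_{1,n}`. -/
def ty (i : Fin n) : T1 k n := LieSubmodule.Quotient.mk (N := tIdeal k n) (fy k n i)

/-- The generator `t i j` (for `i ≠ j`) of `𝔱_{1,n}`. -/
def tt (i j : Fin n) (h : i ≠ j) : T1 k n :=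
  LieSubmodule.Quotient.mk (N := tIdeal k n) (ft k n i j h)

/-- The adjoint operator `ad x : 𝔱_{1,n} → 𝔱_{1,n}`. -/
def adT (v : T1 k n) : Module.End k (T1 k n) := LieAlgebra.ad k (T1 k n) v

section AdPow

open Finset LieAlgebra

variable {R L : Type*} [CommRing R] [LieRing L] [LieAlgebra R L]

/-- Expand `(ad x)^α ⁅y, v⁆ = 0` by the Leibniz rule: every term other than `⁅y, (ad x)^α v⁆`
contains `(ad x)^(γ+1) y = (ad x)^γ ⁅x, y⁆`. -/
theorem lie_ad_pow_of_lie_eq_zero (x y v : L) (hyv : ⁅y, v⁆ = 0) (α : ℕ) :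
    ⁅y, (ad R L x ^ α) v⁆ =
      -∑ γ ∈ range α, (α.choose (α - 1 - γ) : R) •
        ⁅(ad R L x ^ γ) ⁅x, y⁆, (ad R L x ^ (α - 1 - γ)) v⁆ := by
  have leibniz := ad_pow_lie (R := R) x y v α
  rw [hyv, map_zero, Nat.sum_antidiagonal_eq_sum_range_succ_mk, sum_range_succ'] at leibniz
  simp only [Nat.choose_zero_right, one_smul, pow_zero, Module.End.one_apply, Nat.sub_zero]
    at leibniz
  refine (eq_neg_of_add_eq_zero_right leibniz.symm).trans (congrArg _ (sum_congr rfl ?_))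
  intro γ hγ
  have hγα : α = γ + 1 + (α - 1 - γ) := by grind
  rw [Nat.cast_smul_eq_nsmul, ← Nat.choose_symm_of_eq_add hγα, pow_succ, Module.End.mul_apply,
    ad_apply, show α - (γ + 1) = α - 1 - γ by omega]

end AdPow

theorem statement17 (i j l : Fin n)
    (hij : i ≠ j) (hil : i ≠ l) (hjl : j ≠ l) (α : ℕ) :
    ⁅ty k n l, ((adT k n (tx k n i)) ^ α) (tt k n i j hij)⁆ =
    -∑ γ ∈ Finset.range α, (Nat.choose α (α - 1 - γ) : k) •
        ⁅((adT k n (tx k n i)) ^ γ) (tt k n i l hil),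
          ((adT k n (tx k n i)) ^ (α - 1 - γ)) (tt k n i j hij)⁆ := by
  have hyt : ⁅ty k n l, tt k n i j hij⁆ = 0 := by
    rw [ty, tt, ← LieSubmodule.Quotient.mk_bracket, LieSubmodule.Quotient.mk_eq_zero']
    exact LieSubmodule.subset_lieSpan (TRel.yt i j l hij hil.symm hjl.symm)
  have hxy : ⁅tx k n i, ty k n l⁆ = tt k n i l hil := by
    rw [tx, ty, tt, ← LieSubmodule.Quotient.mk_bracket]
    exact (Submodule.Quotient.eq _).mpr (LieSubmodule.subset_lieSpan (TRel.xy i l hil))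
  rw [← hxy]
  exact lie_ad_pow_of_lie_eq_zero (tx k n i) _ _ hyt α
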